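/- arXiv:2509.20994 — 5 statements merged into one kernel-verified Lean document; each statement's English description precedes it below -/
import Mathlib

section
/- Let G be a finite simple graph with m edges. Then f_3(G) ≥ (2/3)·m + (1/3)·h(m); that is, G admits a 3-partition (V_1, V_2, V_3) with e(V_1, V_2, V_3) ≥ (2/3)·m + (1/3)·h(m). -/
open Finset

noncomputable def hfun (x : ℝ) : ℝ := Real.sqrt (2 * x + 1 / 4) - 1 / 2

variable {V : Type*} [Fintype V] [DecidableEq V]

/-- Number of edges of `G` with both endpoints in `S`. -/
def eIn (G : SimpleGraph V) [DecidableRel G.Adj] (S : Finset V) : ℕ :=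
  (Finset.univ.filter (fun p : V × V => G.Adj p.1 p.2 ∧ p.1 ∈ S ∧ p.2 ∈ S)).card / 2

/-- Number of edges of `G` with one endpoint in `S` and the other in `T` (for disjoint `S`, `T`). -/
def eCross (G : SimpleGraph V) [DecidableRel G.Adj] (S T : Finset V) : ℕ :=
  (Finset.univ.filter (fun p : V × V => G.Adj p.1 p.2 ∧ p.1 ∈ S ∧ p.2 ∈ T)).card

/-- `P` is a partition of the vertex set into `k` pairwise disjoint (possibly empty) parts. -/
def IsKPartition {k : ℕ} (P : Fin k → Finset V) : Prop :=
  (∀ i j : Fin k, i ≠ j → Disjoint (P i) (P j)) ∧ ∀ v : V, ∃ i, v ∈ P i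

/-- The number of crossing edges of a `k`-partition. -/
def crossTotal (G : SimpleGraph V) [DecidableRel G.Adj] {k : ℕ} (P : Fin k → Finset V) : ℕ :=
  ∑ i : Fin k, ∑ j : Fin k, if i < j then eCross G (P i) (P j) else 0

/-- `f_k(G)`: the maximum number of crossing edges over all `k`-partitions of `G`. -/
noncomputable def maxCut (G : SimpleGraph V) [DecidableRel G.Adj] (k : ℕ) : ℕ :=
  sSup {n : ℕ | ∃ P : Fin k → Finset V, IsKPartition P ∧ crossTotal G P = n}

/-!
Write `surplus f = 3 · cut(f) - 2m` for a 3-colouring `f` of a graph with `m` edges; the claim is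
`hfun m ≤ surplus f` for some `f`. Deleting a vertex of degree `d` and putting it back into the
colour class holding the fewest of its neighbours raises the surplus by at least `d % 3`. Since
`hfun m ≤ hfun (m - x) + c` once `x + c (c - 1) / 2 ≤ c · hfun m`, induction on `m` settles every
graph having a vertex, or an edge (deleting both ends), whose deletion removes `x` edges and gains
`c` in this sense. In the remaining graphs the non-isolated vertices of degree at most `hfun m` have
degree divisible by three and are independent, and counting degrees shows that there are at least
`hfun m` of them. Repeatedly deleting such a low vertex once its degree is `2 (mod 3)`, and
otherwise some other non-isolated vertex, gains `2` per low vertex.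
-/

theorem Finset.exists_card_mul_card_filter_eq_le {β α : Type*} [Fintype α] [Nonempty α]
    [DecidableEq α] (s : Finset β) (f : β → α) :
    ∃ a, Fintype.card α * #{x ∈ s | f x = a} ≤ #s := by
  obtain ⟨a, -, ha⟩ := exists_le_of_sum_le (s := univ) univ_nonempty
    (f := fun a => Fintype.card α * #{x ∈ s | f x = a}) (g := fun _ => #s) (by
      rw [← mul_sum, ← card_eq_sum_card_fiberwise fun _ _ => mem_univ _]
      simp)
  exact ⟨a, ha⟩

theorem le_hfun_iff {t x : ℝ} (ht : -1 / 2 < t) : t ≤ hfun x ↔ t * (t + 1) ≤ 2 * x := by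
  rw [hfun, le_sub_iff_add_le, Real.le_sqrt' (by linarith)]
  constructor <;> intro h <;> nlinarith

theorem hfun_mul_hfun_add_one {x : ℝ} (hx : -1 / 8 ≤ x) : hfun x * (hfun x + 1) = 2 * x := by
  have := Real.sq_sqrt (show 0 ≤ 2 * x + 1 / 4 by linarith)
  rw [hfun]
  nlinarith

theorem hfun_zero : hfun 0 = 0 := by
  rw [hfun, show (2 * 0 + 1 / 4 : ℝ) = (1 / 2) ^ 2 by norm_num, Real.sqrt_sq (by norm_num)]
  norm_num

theorem hfun_le_hfun_sub_add {a x c : ℝ} (hxa : x ≤ a) (hc : 0 ≤ c)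
    (h : x + c * (c - 1) / 2 ≤ c * hfun a) : hfun a ≤ hfun (a - x) + c := by
  rcases le_or_gt (hfun a) c with hac | hac
  · linarith [(le_hfun_iff (t := 0) (x := a - x) (by norm_num)).2 (by linarith)]
  · have ha := (le_hfun_iff (x := a) (by linarith)).1 le_rfl
    linarith [(le_hfun_iff (t := hfun a - c) (x := a - x) (by linarith)).2 (by nlinarith)]

/-- Deleting `x` of the `m` edges at a surplus gain of `c` preserves the bound `hfun m ≤ surplus`,
by `hfun_le_hfun_sub_add`. -/
def Affordable (m x c : ℕ) : Prop := (x + c * (c - 1) / 2 : ℝ) ≤ c * hfun m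

namespace SimpleGraph

section DeleteIncidenceSet

variable {V : Type*} [Fintype V] {G : SimpleGraph V} [DecidableRel G.Adj]

theorem IsIndepSet.exists_degree_pos_notMem {s : Set V} (hs : G.IsIndepSet s) (hG : G ≠ ⊥) :
    ∃ v ∉ s, 0 < G.degree v := by
  obtain ⟨a, b, hab⟩ := ne_bot_iff_exists_adj.1 hG
  by_cases ha : a ∈ s
  · exact ⟨b, fun hb => hs ha hb hab.ne hab, G.degree_pos_iff_exists_adj b |>.2 ⟨a, hab.symm⟩⟩
  · exact ⟨a, ha, G.degree_pos_iff_exists_adj a |>.2 ⟨b, hab⟩⟩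

variable (G) [DecidableEq V]

theorem card_edgeFinset_deleteIncidenceSet_add_degree (v : V) :
    #(G.deleteIncidenceSet v).edgeFinset + G.degree v = #G.edgeFinset := by
  rw [card_edgeFinset_deleteIncidenceSet, Nat.sub_add_cancel (G.degree_le_card_edgeFinset v)]

theorem neighborFinset_deleteIncidenceSet_of_ne {v w : V} (hw : w ≠ v) :
    (G.deleteIncidenceSet v).neighborFinset w = (G.neighborFinset w).erase v := by
  ext x
  simp only [mem_neighborFinset, mem_erase, deleteIncidenceSet_adj]
  tauto

theorem degree_deleteIncidenceSet_add_one {v w : V} (h : G.Adj v w) :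
    (G.deleteIncidenceSet v).degree w + 1 = G.degree w := by
  rw [← card_neighborFinset_eq_degree, ← card_neighborFinset_eq_degree,
    neighborFinset_deleteIncidenceSet_of_ne G h.ne', card_erase_add_one]
  exact (G.mem_neighborFinset w v).2 h.symm

theorem degree_deleteIncidenceSet_of_not_adj {v w : V} (h : ¬G.Adj v w) (hw : w ≠ v) :
    (G.deleteIncidenceSet v).degree w = G.degree w := by
  rw [← card_neighborFinset_eq_degree, ← card_neighborFinset_eq_degree,
    neighborFinset_deleteIncidenceSet_of_ne G hw, erase_eq_of_notMem]
  exact fun hv => h ((G.mem_neighborFinset w v).1 hv).symm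

end DeleteIncidenceSet

section Cut

variable {V α : Type*} (G : SimpleGraph V)

def cutGraph (f : V → α) : SimpleGraph V where
  Adj a b := G.Adj a b ∧ f a ≠ f b
  symm := ⟨fun _ _ h => ⟨h.1.symm, h.2.symm⟩⟩
  loopless := ⟨fun a h => G.loopless.irrefl a h.1⟩

@[simp]
theorem cutGraph_adj {f : V → α} {a b : V} : (G.cutGraph f).Adj a b ↔ G.Adj a b ∧ f a ≠ f b :=
  Iff.rfl

instance [DecidableRel G.Adj] [DecidableEq α] (f : V → α) : DecidableRel (G.cutGraph f).Adj :=
  fun a b => inferInstanceAs (Decidable (G.Adj a b ∧ f a ≠ f b))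

variable [Fintype V] [DecidableRel G.Adj] [DecidableEq α]

theorem card_edgeFinset_cutGraph_eq_card_lt [LinearOrder α] (f : V → α) :
    #(G.cutGraph f).edgeFinset = #{p : V × V | G.Adj p.1 p.2 ∧ f p.1 < f p.2} := by
  symm
  refine card_bij (fun p _ => s(p.1, p.2)) (fun p hp => ?_) (fun p hp q hq hpq => ?_) ?_
  · obtain ⟨h, hlt⟩ := (mem_filter.1 hp).2
    exact mem_edgeFinset.2 ⟨h, hlt.ne⟩
  · obtain ⟨-, hp⟩ := (mem_filter.1 hp).2
    obtain ⟨-, hq⟩ := (mem_filter.1 hq).2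
    rcases Sym2.eq_iff.1 hpq with ⟨h1, h2⟩ | ⟨h1, h2⟩
    · exact Prod.ext h1 h2
    · exact absurd (h1 ▸ h2 ▸ hq) hp.asymm
  · intro e he
    induction e using Sym2.ind with
    | _ a b =>
    obtain ⟨hab, hne⟩ := mem_edgeFinset.1 he
    rcases hne.lt_or_gt with h | h
    · exact ⟨(a, b), mem_filter.2 ⟨mem_univ _, hab, h⟩, rfl⟩
    · exact ⟨(b, a), mem_filter.2 ⟨mem_univ _, hab.symm, h⟩, Sym2.eq_swap⟩

variable [DecidableEq V]

theorem card_edgeFinset_cutGraph_update (f : V → α) (v : V) (a : α) :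
    #(G.cutGraph (Function.update f v a)).edgeFinset =
      #((G.deleteIncidenceSet v).cutGraph f).edgeFinset +
        #{w ∈ G.neighborFinset v | f w ≠ a} := by
  set f' := Function.update f v a
  have hdel : (G.deleteIncidenceSet v).cutGraph f = (G.cutGraph f').deleteIncidenceSet v := by
    ext x y
    simp only [cutGraph_adj, deleteIncidenceSet_adj]
    constructor
    · rintro ⟨⟨hxy, hx, hy⟩, hf⟩
      exact ⟨⟨hxy, by simpa [f', hx, hy] using hf⟩, hx, hy⟩
    · rintro ⟨⟨hxy, hf⟩, hx, hy⟩
      exact ⟨⟨hxy, hx, hy⟩, by simpa [f', hx, hy] using hf⟩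
  have hdeg : (G.cutGraph f').degree v = #{w ∈ G.neighborFinset v | f w ≠ a} := by
    rw [← card_neighborFinset_eq_degree]
    congr 1
    ext w
    simp only [mem_neighborFinset, cutGraph_adj, mem_filter]
    constructor
    · rintro ⟨h, hf⟩
      exact ⟨h, by simpa [f', h.ne'] using hf.symm⟩
    · rintro ⟨h, hf⟩
      exact ⟨h, by simpa [f', h.ne'] using hf.symm⟩
  rw [← hdeg, ← card_edgeFinset_deleteIncidenceSet_add_degree (G.cutGraph f') v,
    edgeFinset_inj.2 hdel]

end Cut

section Surplus

variable {V : Type*} [Fintype V] (G : SimpleGraph V) [DecidableRel G.Adj]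

/-- The excess of the cut of `f` over the expected cut of a uniformly random `k`-colouring, scaled
by `k`. -/
def surplus {k : ℕ} (f : V → Fin k) : ℤ :=
  k * #(G.cutGraph f).edgeFinset - (k - 1) * #G.edgeFinset

variable [DecidableEq V]

theorem exists_surplus_deleteIncidenceSet_add_le {k : ℕ} [NeZero k] (f : V → Fin k) (v : V) :
    ∃ a, (G.deleteIncidenceSet v).surplus f + (G.degree v % k : ℕ) ≤
      G.surplus (Function.update f v a) := by
  obtain ⟨a, ha⟩ := (G.neighborFinset v).exists_card_mul_card_filter_eq_le f
  rw [Fintype.card_fin, card_neighborFinset_eq_degree] at ha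
  refine ⟨a, ?_⟩
  have hsplit := card_filter_add_card_filter_not (s := G.neighborFinset v) (f · = a)
  rw [card_neighborFinset_eq_degree] at hsplit
  have hq := (Nat.le_div_iff_mul_le (NeZero.pos k)).2 (mul_comm k _ ▸ ha)
  have hdiv := Nat.div_add_mod (G.degree v) k
  generalize G.degree v / k = q at hq hdiv
  generalize G.degree v % k = r at hdiv ⊢
  have hkq : (k : ℤ) * #{w ∈ G.neighborFinset v | f w = a} ≤ k * q := by
    exact_mod_cast Nat.mul_le_mul_left k hq
  have hsplitZ := congrArg (fun n : ℕ => (k * n : ℤ)) hsplit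
  push_cast at hsplitZ hdiv
  rw [surplus, surplus, G.card_edgeFinset_cutGraph_update f v a,
    ← G.card_edgeFinset_deleteIncidenceSet_add_degree v]
  push_cast
  linarith

theorem exists_two_mul_card_le_surplus (L : Finset V) (hL : G.IsIndepSet L)
    (hdeg : ∀ u ∈ L, 0 < G.degree u ∧ G.degree u % 3 ≠ 1) :
    ∃ f : V → Fin 3, 2 * #L ≤ G.surplus f := by
  induction hm : #G.edgeFinset using Nat.strong_induction_on generalizing G L with
  | _ m ih =>
  have hdel := G.card_edgeFinset_deleteIncidenceSet_add_degree
  by_cases h2 : ∃ u ∈ L, G.degree u % 3 = 2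
  · obtain ⟨u, hu, hu2⟩ := h2
    have hLu : ∀ w ∈ L.erase u, ¬G.Adj u w := fun w hw =>
      hL hu (mem_of_mem_erase hw) (ne_of_mem_erase hw).symm
    obtain ⟨f₀, hf₀⟩ := ih _ (by have := hdel u; omega) (G.deleteIncidenceSet u) (L.erase u)
      ((hL.mono (by simp)).mono' fun _ _ h hadj => h (deleteIncidenceSet_le G u hadj))
      (fun w hw => G.degree_deleteIncidenceSet_of_not_adj (hLu w hw) (ne_of_mem_erase hw) ▸
        hdeg w (mem_of_mem_erase hw)) rfl
    obtain ⟨a, ha⟩ := G.exists_surplus_deleteIncidenceSet_add_le f₀ u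
    refine ⟨_, le_trans ?_ ha⟩
    rw [← card_erase_add_one hu, hu2]
    push_cast
    linarith
  push Not at h2
  rcases Nat.eq_zero_or_pos m with rfl | hpos
  · have : L = ∅ := eq_empty_of_forall_notMem fun u hu => by
      have := G.degree_le_card_edgeFinset u
      have := hdeg u hu
      omega
    exact ⟨fun _ => 0, by simp [surplus, this, hm]⟩
  -- All degrees in `L` are now divisible by 3, so deleting any `v ∉ L` keeps `hdeg` true.
  obtain ⟨v, hvL, hv⟩ :=
    hL.exists_degree_pos_notMem (edgeFinset_nonempty.1 (card_pos.1 (hm ▸ hpos)))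
  obtain ⟨f₀, hf₀⟩ := ih _ (by have := hdel v; omega) (G.deleteIncidenceSet v) L
    (hL.mono' fun _ _ h hadj => h (deleteIncidenceSet_le G v hadj))
    (fun w hw => by
      have := hdeg w hw
      have := h2 w hw
      by_cases hvw : G.Adj v w
      · have := G.degree_deleteIncidenceSet_add_one hvw
        omega
      · rw [G.degree_deleteIncidenceSet_of_not_adj hvw fun h => hvL (h ▸ hw)]
        omega) rfl
  obtain ⟨c, hc⟩ := G.exists_surplus_deleteIncidenceSet_add_le f₀ v
  exact ⟨_, by linarith⟩

end Surplus

section LowDegree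

variable {V : Type*} [Fintype V] (G : SimpleGraph V) [DecidableRel G.Adj]

noncomputable def lowDegreeVertices (h : ℝ) : Finset V :=
  {v | 0 < G.degree v ∧ (G.degree v : ℝ) ≤ h}

variable [DecidableEq V]

theorem degree_add_one_le_card_support {v : V} (hv : 0 < G.degree v) :
    G.degree v + 1 ≤ #{w | 0 < G.degree w} := by
  rw [← card_neighborFinset_eq_degree, ← card_insert_of_notMem (G.notMem_neighborFinset_self v)]
  refine card_le_card fun w hw => mem_filter.2 ⟨mem_univ w, ?_⟩
  rcases mem_insert.1 hw with rfl | hw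
  · exact hv
  · exact G.degree_pos_iff_exists_adj w |>.2 ⟨v, ((G.mem_neighborFinset v w).1 hw).symm⟩

/-- Split the set `S` of non-isolated vertices into `L = lowDegreeVertices h` and the rest `H`.
Every `u ∈ L` has a neighbour in `H`, of degree less than `|S|`, so `deg u ≥ 2h + 1 - |S|`; summing,
`|L| (2h + 1 - |S|) + |H| h ≤ 2m ≤ h (h + 1)`, that is `(|L| - h) (|S| - h - 1) ≥ 0`, while any
vertex of `H` shows `|S| > h + 1`. -/
theorem le_card_lowDegreeVertices {h : ℝ} (hm : 2 * #G.edgeFinset ≤ h * (h + 1))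
    (hpos : 0 < #G.edgeFinset) (hind : G.IsIndepSet (G.lowDegreeVertices h))
    (hsum : ∀ u ∈ G.lowDegreeVertices h, ∀ v, G.Adj u v → 2 * h ≤ G.degree u + G.degree v) :
    h ≤ #(G.lowDegreeVertices h) := by
  set S : Finset V := {v | 0 < G.degree v}
  set L := G.lowDegreeVertices h
  set H := S.filter fun v => ¬(G.degree v : ℝ) ≤ h
  have hLS : L = S.filter fun v => (G.degree v : ℝ) ≤ h := by
    simp only [L, S, lowDegreeVertices, filter_filter]
  have hmemH : ∀ v ∉ L, 0 < G.degree v → v ∈ H := fun v hvL hv =>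
    mem_filter.2 ⟨mem_filter.2 ⟨mem_univ v, hv⟩, fun hvh =>
      hvL (hLS ▸ mem_filter.2 ⟨mem_filter.2 ⟨mem_univ v, hv⟩, hvh⟩)⟩
  have hsumS : ∑ v ∈ S, (G.degree v : ℝ) = 2 * #G.edgeFinset := by
    rw [sum_filter_of_ne fun v _ hv => Nat.pos_of_ne_zero (by exact_mod_cast hv)]
    exact_mod_cast G.sum_degrees_eq_twice_card_edges
  have hsplit :
      ∑ v ∈ L, (G.degree v : ℝ) + ∑ v ∈ H, (G.degree v : ℝ) = 2 * #G.edgeFinset := by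
    rw [hLS, sum_filter_add_sum_filter_not, hsumS]
  have hcard : (#L : ℝ) + #H = #S := by
    rw [hLS]
    exact_mod_cast card_filter_add_card_filter_not _
  have hdegS : ∀ v, 0 < G.degree v → (G.degree v : ℝ) + 1 ≤ #S := fun v hv => by
    exact_mod_cast G.degree_add_one_le_card_support hv
  have hL : ∀ u ∈ L, 2 * h + 1 - #S ≤ (G.degree u : ℝ) := fun u hu => by
    obtain ⟨v, huv⟩ := G.degree_pos_iff_exists_adj u |>.1 (mem_filter.1 hu).2.1
    linarith [hsum u hu v huv, hdegS v (G.degree_pos_iff_exists_adj v |>.2 ⟨u, huv.symm⟩)]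
  have hH : ∀ v ∈ H, h ≤ (G.degree v : ℝ) := fun v hv => (not_le.1 (mem_filter.1 hv).2).le
  obtain ⟨v₀, hv₀L, hv₀⟩ :=
    hind.exists_degree_pos_notMem (edgeFinset_nonempty.1 (card_pos.1 hpos))
  have hS : h + 1 < #S := by
    linarith [hdegS v₀ hv₀, not_le.1 (mem_filter.1 (hmemH v₀ hv₀L hv₀)).2]
  have hLsum := card_nsmul_le_sum L _ _ hL
  have hHsum := card_nsmul_le_sum H _ _ hH
  rw [nsmul_eq_mul] at hLsum hHsum
  nlinarith

end LowDegree

section Induction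

variable {V : Type*} [Fintype V] (G : SimpleGraph V) [DecidableRel G.Adj]

theorem exists_hfun_le_surplus_of_gain {G' : SimpleGraph V} [DecidableRel G'.Adj] {k x c : ℕ}
    (hx : #G'.edgeFinset + x = #G.edgeFinset) (hc : Affordable #G.edgeFinset x c)
    (hG' : ∃ f : V → Fin k, hfun #G'.edgeFinset ≤ G'.surplus f)
    (hgain : ∀ f' : V → Fin k, ∃ f : V → Fin k, G'.surplus f' + c ≤ G.surplus f) :
    ∃ f : V → Fin k, hfun #G.edgeFinset ≤ G.surplus f := by
  obtain ⟨f', hf'⟩ := hG'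
  obtain ⟨f, hf⟩ := hgain f'
  have hxR : (#G'.edgeFinset : ℝ) = #G.edgeFinset - x := by
    rw [← hx]
    push_cast
    ring
  have hstep := hfun_le_hfun_sub_add (by linarith [(#G'.edgeFinset).cast_nonneg (α := ℝ)])
    c.cast_nonneg hc
  have hfR : ((G'.surplus f' + c : ℤ) : ℝ) ≤ G.surplus f := by exact_mod_cast hf
  push_cast at hfR
  exact ⟨f, by rw [← hxR] at hstep; linarith⟩

/-- Neither the vertex step `exists_hfun_le_surplus_of_vertex` nor the edge step
`exists_hfun_le_surplus_of_adj` applies with three colours. -/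
def IsStuck : Prop :=
  (∀ v, 0 < G.degree v → ¬Affordable #G.edgeFinset (G.degree v) (G.degree v % 3)) ∧
    ∀ y z, G.Adj y z → ¬Affordable #G.edgeFinset (G.degree y + G.degree z - 1)
      (G.degree y % 3 + (G.degree z - 1) % 3)

variable {G}

theorem IsStuck.degree_mod_three_eq_zero (hG : G.IsStuck) {u : V}
    (hu : u ∈ G.lowDegreeVertices (hfun #G.edgeFinset)) : G.degree u % 3 = 0 := by
  obtain ⟨hpos, hlow⟩ := (mem_filter.1 hu).2
  have h := hG.1 u hpos
  have : G.degree u % 3 < 3 := Nat.mod_lt _ (by norm_num)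
  interval_cases hmod : G.degree u % 3
  · rfl
  · simp [Affordable] at h
    linarith
  · simp [Affordable] at h
    have : (2 : ℝ) ≤ G.degree u := by exact_mod_cast (by omega : 2 ≤ G.degree u)
    linarith

theorem IsStuck.isIndepSet_lowDegreeVertices (hG : G.IsStuck) :
    G.IsIndepSet (G.lowDegreeVertices (hfun #G.edgeFinset)) := by
  intro u hu w hw _ huw
  have hu0 := hG.degree_mod_three_eq_zero hu
  have hw0 := hG.degree_mod_three_eq_zero hw
  have hu := (mem_filter.1 hu).2
  have hw := (mem_filter.1 hw).2
  have h := hG.2 u w huw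
  rw [hu0, show (G.degree w - 1) % 3 = 2 by omega] at h
  simp [Affordable, Nat.cast_sub (show 1 ≤ G.degree u + G.degree w by omega)] at h
  linarith

theorem IsStuck.two_mul_hfun_le_degree_add_degree (hG : G.IsStuck) {u v : V}
    (hu : u ∈ G.lowDegreeVertices (hfun #G.edgeFinset)) (huv : G.Adj u v) :
    2 * hfun #G.edgeFinset ≤ G.degree u + G.degree v := by
  have hu0 := hG.degree_mod_three_eq_zero hu
  obtain ⟨hupos, hlow⟩ := (mem_filter.1 hu).2
  have hu3 : (3 : ℝ) ≤ G.degree u := by exact_mod_cast (by omega : 3 ≤ G.degree u)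
  have hv := G.degree_pos_iff_exists_adj v |>.2 ⟨u, huv.symm⟩
  have hcast : ((G.degree u + G.degree v - 1 : ℕ) : ℝ) = G.degree u + G.degree v - 1 := by
    rw [Nat.cast_sub (by omega)]
    push_cast
    ring
  have : G.degree v % 3 < 3 := Nat.mod_lt _ (by norm_num)
  interval_cases hmod : G.degree v % 3
  · have h := hG.2 u v huv
    rw [hu0, show (G.degree v - 1) % 3 = 2 by omega] at h
    simp [Affordable, hcast] at h
    linarith
  -- Otherwise deleting `v` first gains `3` or `4`, which is affordable unless `deg u + deg v` is
  -- large; `hfun m ≥ deg u ≥ 3` makes "large" at least `2 hfun m`.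
  · have h := hG.2 v u huv.symm
    rw [hmod, show (G.degree u - 1) % 3 = 2 by omega, add_comm (G.degree v)] at h
    simp [Affordable, hcast] at h
    linarith
  · have h := hG.2 v u huv.symm
    rw [hmod, show (G.degree u - 1) % 3 = 2 by omega, add_comm (G.degree v)] at h
    simp [Affordable, hcast] at h
    linarith

variable (G) [DecidableEq V]

theorem exists_hfun_le_surplus_of_vertex {k : ℕ} [NeZero k] (v : V)
    (hc : Affordable #G.edgeFinset (G.degree v) (G.degree v % k))
    (hG' : ∃ f : V → Fin k, hfun #(G.deleteIncidenceSet v).edgeFinset ≤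
      (G.deleteIncidenceSet v).surplus f) :
    ∃ f : V → Fin k, hfun #G.edgeFinset ≤ G.surplus f :=
  G.exists_hfun_le_surplus_of_gain (G.card_edgeFinset_deleteIncidenceSet_add_degree v) hc hG'
    fun f' => (G.exists_surplus_deleteIncidenceSet_add_le f' v).elim fun _ h => ⟨_, h⟩

theorem exists_hfun_le_surplus_of_adj {k : ℕ} [NeZero k] {y z : V} (hyz : G.Adj y z)
    (hc : Affordable #G.edgeFinset (G.degree y + G.degree z - 1)
      (G.degree y % k + (G.degree z - 1) % k))
    (hG' : ∃ f : V → Fin k, hfun #((G.deleteIncidenceSet y).deleteIncidenceSet z).edgeFinset ≤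
      ((G.deleteIncidenceSet y).deleteIncidenceSet z).surplus f) :
    ∃ f : V → Fin k, hfun #G.edgeFinset ≤ G.surplus f := by
  have hy := G.card_edgeFinset_deleteIncidenceSet_add_degree y
  have hz := (G.deleteIncidenceSet y).card_edgeFinset_deleteIncidenceSet_add_degree z
  rw [← G.degree_deleteIncidenceSet_add_one hyz, Nat.add_sub_cancel] at hc
  refine G.exists_hfun_le_surplus_of_gain (by omega) hc hG' fun f'' => ?_
  obtain ⟨a, ha⟩ := (G.deleteIncidenceSet y).exists_surplus_deleteIncidenceSet_add_le f'' z
  obtain ⟨b, hb⟩ := G.exists_surplus_deleteIncidenceSet_add_le (Function.update f'' z a) y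
  exact ⟨_, by push_cast at ha hb ⊢; linarith⟩

variable {G}

theorem IsStuck.exists_hfun_le_surplus (hG : G.IsStuck) :
    ∃ f : V → Fin 3, hfun #G.edgeFinset ≤ G.surplus f := by
  set L := G.lowDegreeVertices (hfun #G.edgeFinset)
  obtain ⟨f, hf⟩ := G.exists_two_mul_card_le_surplus L hG.isIndepSet_lowDegreeVertices
    fun u hu => ⟨(mem_filter.1 hu).2.1, by rw [hG.degree_mod_three_eq_zero hu]; norm_num⟩
  have hfR : ((2 * #L : ℤ) : ℝ) ≤ G.surplus f := by exact_mod_cast hf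
  push_cast at hfR
  refine ⟨f, ?_⟩
  rcases Nat.eq_zero_or_pos #G.edgeFinset with h0 | hpos
  · rw [h0, Nat.cast_zero, hfun_zero]
    linarith [(#L).cast_nonneg (α := ℝ)]
  · have := G.le_card_lowDegreeVertices
      (hfun_mul_hfun_add_one (by linarith [(#G.edgeFinset).cast_nonneg (α := ℝ)])).ge hpos
      hG.isIndepSet_lowDegreeVertices fun _ hu _ huv =>
        hG.two_mul_hfun_le_degree_add_degree hu huv
    linarith

variable (G)

theorem exists_hfun_le_surplus : ∃ f : V → Fin 3, hfun #G.edgeFinset ≤ G.surplus f := by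
  induction hm : #G.edgeFinset using Nat.strong_induction_on generalizing G with
  | _ m ih =>
  subst hm
  have hdel := G.card_edgeFinset_deleteIncidenceSet_add_degree
  by_cases hvert : ∃ v, 0 < G.degree v ∧ Affordable #G.edgeFinset (G.degree v) (G.degree v % 3)
  · obtain ⟨v, hv, hc⟩ := hvert
    exact G.exists_hfun_le_surplus_of_vertex v hc (ih _ (by linarith [hdel v]) _ rfl)
  by_cases hpair : ∃ y z, G.Adj y z ∧ Affordable #G.edgeFinset (G.degree y + G.degree z - 1)
      (G.degree y % 3 + (G.degree z - 1) % 3)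
  · obtain ⟨y, z, hyz, hc⟩ := hpair
    have hy := G.degree_pos_iff_exists_adj y |>.2 ⟨z, hyz⟩
    have hz := (G.deleteIncidenceSet y).card_edgeFinset_deleteIncidenceSet_add_degree z
    exact G.exists_hfun_le_surplus_of_adj hyz hc (ih _ (by linarith [hdel y]) _ rfl)
  push Not at hvert hpair
  exact IsStuck.exists_hfun_le_surplus ⟨hvert, hpair⟩

end Induction

end SimpleGraph

section Partition

variable {V : Type*} [Fintype V] {k : ℕ}

def colorClasses (f : V → Fin k) : Fin k → Finset V := fun i => {v | f v = i}

theorem isKPartition_colorClasses (f : V → Fin k) : IsKPartition (colorClasses f) :=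
  ⟨fun _ _ hij => disjoint_filter.2 fun _ _ hi hj => hij (hi ▸ hj),
    fun v => ⟨f v, mem_filter.2 ⟨mem_univ v, rfl⟩⟩⟩

variable [DecidableEq V] (G : SimpleGraph V) [DecidableRel G.Adj]

theorem crossTotal_colorClasses (f : V → Fin k) :
    crossTotal G (colorClasses f) = #(G.cutGraph f).edgeFinset := by
  rw [G.card_edgeFinset_cutGraph_eq_card_lt, crossTotal, card_eq_sum_card_fiberwise
    (f := fun p => (f p.1, f p.2)) (t := {ij | ij.1 < ij.2})
    (fun p hp => by simpa using (mem_filter.1 hp).2.2), sum_filter, Fintype.sum_prod_type]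
  refine sum_congr rfl fun i _ => sum_congr rfl fun j _ => ?_
  split_ifs with hij
  · unfold eCross colorClasses
    congr 1
    ext p
    simp only [mem_filter, mem_univ, true_and, Prod.mk.injEq]
    constructor
    · rintro ⟨h, rfl, rfl⟩
      exact ⟨⟨h, hij⟩, rfl, rfl⟩
    · rintro ⟨⟨h, -⟩, rfl, rfl⟩
      exact ⟨h, rfl, rfl⟩
  · rfl

theorem le_maxCut {P : Fin k → Finset V} (hP : IsKPartition P) : crossTotal G P ≤ maxCut G k :=
  le_csSup ((Set.finite_range fun P : Fin k → Finset V => crossTotal G P).subset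
    (by rintro _ ⟨P, -, rfl⟩; exact ⟨P, rfl⟩)).bddAbove ⟨P, hP, rfl⟩

end Partition

/-- Every graph with `m` edges has a 3-partition with at least `(2/3)m + (1/3)h(m)`
crossing edges, i.e. `f₃(G) ≥ (2/3)m + (1/3)h(m)`. -/
theorem stmt_0 {V : Type*} [Fintype V] [DecidableEq V]
    (G : SimpleGraph V) [DecidableRel G.Adj] (m : ℕ) (hm : m = G.edgeFinset.card) :
    (2 / 3 : ℝ) * m + (1 / 3) * hfun m ≤ (maxCut G 3 : ℝ) := by
  obtain ⟨f, hf⟩ := G.exists_hfun_le_surplus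
  have hcut : #(G.cutGraph f).edgeFinset ≤ maxCut G 3 :=
    crossTotal_colorClasses G f ▸ le_maxCut G (isKPartition_colorClasses f)
  have hcutR : (#(G.cutGraph f).edgeFinset : ℝ) ≤ maxCut G 3 := by exact_mod_cast hcut
  rw [SimpleGraph.surplus] at hf
  push_cast at hf
  subst hm
  linarith
end

section
/- Let n be a positive integer not divisible by 3, let K_n be the complete graph on n vertices, and let m = n(n−1)/2 be its number of edges. Then f_3(K_n) = (2/3)·m + (1/3)·h(m). -/
open Finset

variable {V : Type*} [Fintype V] [DecidableEq V]

/- ### Auxiliary lemmas -/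

lemma eCross_top {n : ℕ} (S T : Finset (Fin n)) (h : Disjoint S T) :
    eCross (⊤ : SimpleGraph (Fin n)) S T = S.card * T.card := by
  rw [eCross, ← Finset.card_product]
  congr 1
  ext p
  simp only [Finset.mem_filter, Finset.mem_univ, true_and, Finset.mem_product,
    SimpleGraph.top_adj]
  constructor
  · rintro ⟨_, h1, h2⟩; exact ⟨h1, h2⟩
  · rintro ⟨h1, h2⟩
    exact ⟨fun he => (Finset.disjoint_left.mp h (he ▸ h1)) h2, h1, h2⟩

lemma crossTotal_three (G : SimpleGraph V) [DecidableRel G.Adj] (P : Fin 3 → Finset V) :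
    crossTotal G P =
      eCross G (P 0) (P 1) + eCross G (P 0) (P 2) + eCross G (P 1) (P 2) := by
  have h01 : (0 : Fin 3) < 1 := by decide
  have h02 : (0 : Fin 3) < 2 := by decide
  have h12 : (1 : Fin 3) < 2 := by decide
  have n00 : ¬ (0 : Fin 3) < 0 := by decide
  have n10 : ¬ (1 : Fin 3) < 0 := by decide
  have n11 : ¬ (1 : Fin 3) < 1 := by decide
  have n20 : ¬ (2 : Fin 3) < 0 := by decide
  have n21 : ¬ (2 : Fin 3) < 1 := by decide
  have n22 : ¬ (2 : Fin 3) < 2 := by decide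
  rw [crossTotal, Fin.sum_univ_three]
  rw [Fin.sum_univ_three, Fin.sum_univ_three, Fin.sum_univ_three]
  rw [if_neg n00, if_pos h01, if_pos h02, if_neg n10, if_neg n11, if_pos h12,
    if_neg n20, if_neg n21, if_neg n22]
  ring

lemma card_parts {n : ℕ} (P : Fin 3 → Finset (Fin n)) (hP : IsKPartition P) :
    (P 0).card + (P 1).card + (P 2).card = n := by
  have h01 := hP.1 0 1 (by decide)
  have h02 := hP.1 0 2 (by decide)
  have h12 := hP.1 1 2 (by decide)
  have hu : P 0 ∪ P 1 ∪ P 2 = (Finset.univ : Finset (Fin n)) := by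
    ext v
    simp only [Finset.mem_union, Finset.mem_univ, iff_true]
    obtain ⟨i, hi⟩ := hP.2 v
    fin_cases i <;> tauto
  have := congrArg Finset.card hu
  rw [Finset.card_union_of_disjoint (by
      rw [Finset.disjoint_union_left]; exact ⟨h02, h12⟩),
    Finset.card_union_of_disjoint h01, Finset.card_univ, Fintype.card_fin] at this
  exact this

lemma upper_bound {n : ℕ} (hn3 : ¬ (3 ∣ n)) (M : ℕ) (hM : 3 * M + 1 = n ^ 2)
    (P : Fin 3 → Finset (Fin n)) (hP : IsKPartition P) :
    crossTotal (⊤ : SimpleGraph (Fin n)) P ≤ M := by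
  set a := (P 0).card with ha
  set b := (P 1).card with hb
  set c := (P 2).card with hc
  have hsum : a + b + c = n := card_parts P hP
  have hct : crossTotal (⊤ : SimpleGraph (Fin n)) P = a * b + a * c + b * c := by
    rw [crossTotal_three, eCross_top _ _ (hP.1 0 1 (by decide)),
      eCross_top _ _ (hP.1 0 2 (by decide)), eCross_top _ _ (hP.1 1 2 (by decide))]
  rw [hct]
  have hCS : a * b + a * c + b * c ≤ a ^ 2 + b ^ 2 + c ^ 2 := by
    nlinarith [two_mul_le_add_sq a b, two_mul_le_add_sq a c, two_mul_le_add_sq b c]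
  have hsq : n ^ 2 = a ^ 2 + b ^ 2 + c ^ 2 + 2 * (a * b + a * c + b * c) := by
    rw [← hsum]; ring
  rcases eq_or_lt_of_le hCS with heq | hlt
  · exfalso
    apply hn3
    have h3 : (3 : ℕ).Prime := Nat.prime_three
    have : (3 : ℕ) ∣ n ^ 2 := ⟨a * b + a * c + b * c, by rw [hsq, ← heq]; ring⟩
    exact h3.dvd_of_dvd_pow this
  · -- a*b+a*c+b*c + 1 ≤ a^2+b^2+c^2, and n^2 = 3M+1
    have h1 : a ^ 2 + b ^ 2 + c ^ 2 + 2 * (a * b + a * c + b * c) = 3 * M + 1 := by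
      rw [← hsq, hM]
    linarith

lemma key_arith (n : ℕ) (hn3 : ¬ (3 ∣ n)) :
    3 * (n / 3 * (2 * n / 3 - n / 3) + n / 3 * (n - 2 * n / 3) +
      (2 * n / 3 - n / 3) * (n - 2 * n / 3)) + 1 = n ^ 2 := by
  obtain ⟨q, r, hr, rfl⟩ : ∃ q r, (r = 1 ∨ r = 2) ∧ n = 3 * q + r :=
    ⟨n / 3, n % 3, by omega, by omega⟩
  rcases hr with rfl | rfl
  · have d1 : (3 * q + 1) / 3 = q := by omega
    have d2 : 2 * (3 * q + 1) / 3 = 2 * q := by omega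
    rw [d1, d2]
    have d3 : 2 * q - q = q := by omega
    have d4 : 3 * q + 1 - 2 * q = q + 1 := by omega
    rw [d3, d4]; ring
  · have d1 : (3 * q + 2) / 3 = q := by omega
    have d2 : 2 * (3 * q + 2) / 3 = 2 * q + 1 := by omega
    rw [d1, d2]
    have d3 : 2 * q + 1 - q = q + 1 := by omega
    have d4 : 3 * q + 2 - (2 * q + 1) = q + 1 := by omega
    rw [d3, d4]; ring

/-- index of the part that vertex `v` goes into, for the balanced partition. -/
def idx3 (n : ℕ) (v : Fin n) : Fin 3 :=
  if v.val < n / 3 then 0 else if v.val < 2 * n / 3 then 1 else 2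

def Pbal (n : ℕ) : Fin 3 → Finset (Fin n) :=
  fun i => Finset.univ.filter (fun v => idx3 n v = i)

lemma Pbal_isPartition (n : ℕ) : IsKPartition (Pbal n) := by
  constructor
  · intro i j hij
    rw [Finset.disjoint_left]
    intro v hv hv'
    simp only [Pbal, Finset.mem_filter] at hv hv'
    exact hij (hv.2 ▸ hv'.2)
  · intro v
    exact ⟨idx3 n v, by simp [Pbal]⟩

lemma card_filter_fin (n : ℕ) (p : ℕ → Prop) [DecidablePred p] :
    (Finset.univ.filter (fun v : Fin n => p v.val)).card =
      ((Finset.range n).filter p).card := by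
  rw [Finset.card_filter, Finset.card_filter,
    Fin.sum_univ_eq_sum_range (fun i => if p i then 1 else 0)]

lemma Pbal_card (n : ℕ) :
    (Pbal n 0).card = n / 3 ∧ (Pbal n 1).card = 2 * n / 3 - n / 3 ∧
      (Pbal n 2).card = n - 2 * n / 3 := by
  have hab : n / 3 ≤ 2 * n / 3 := by omega
  have hbn : 2 * n / 3 ≤ n := by omega
  refine ⟨?_, ?_, ?_⟩
  · have : (Pbal n 0) = Finset.univ.filter (fun v : Fin n => v.val < n / 3) := by
      apply Finset.filter_congr
      intro v _
      unfold idx3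
      split_ifs with h1 h2 <;> simp_all <;> omega
    rw [this, card_filter_fin n (fun x => x < n / 3)]
    have : (Finset.range n).filter (fun x => x < n / 3) = Finset.range (n / 3) := by
      ext x; simp; omega
    rw [this, Finset.card_range]
  · have : (Pbal n 1) = Finset.univ.filter
        (fun v : Fin n => n / 3 ≤ v.val ∧ v.val < 2 * n / 3) := by
      apply Finset.filter_congr
      intro v _
      unfold idx3
      split_ifs with h1 h2 <;> simp_all <;> omega
    rw [this, card_filter_fin n (fun x => n / 3 ≤ x ∧ x < 2 * n / 3)]
    have : (Finset.range n).filter (fun x => n / 3 ≤ x ∧ x < 2 * n / 3) =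
        Finset.Ico (n / 3) (2 * n / 3) := by
      ext x; simp [Finset.mem_Ico]; omega
    rw [this, Nat.card_Ico]
  · have : (Pbal n 2) = Finset.univ.filter (fun v : Fin n => 2 * n / 3 ≤ v.val) := by
      apply Finset.filter_congr
      intro v _
      unfold idx3
      split_ifs with h1 h2 <;> simp_all <;> omega
    rw [this, card_filter_fin n (fun x => 2 * n / 3 ≤ x)]
    have : (Finset.range n).filter (fun x => 2 * n / 3 ≤ x) =
        Finset.Ico (2 * n / 3) n := by
      ext x; simp [Finset.mem_Ico]; omega
    rw [this, Nat.card_Ico]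

lemma Pbal_crossTotal (n : ℕ) :
    crossTotal (⊤ : SimpleGraph (Fin n)) (Pbal n) =
      n / 3 * (2 * n / 3 - n / 3) + n / 3 * (n - 2 * n / 3) +
        (2 * n / 3 - n / 3) * (n - 2 * n / 3) := by
  obtain ⟨h0, h1, h2⟩ := Pbal_card n
  have hP := Pbal_isPartition n
  rw [crossTotal_three, eCross_top _ _ (hP.1 0 1 (by decide)),
    eCross_top _ _ (hP.1 0 2 (by decide)), eCross_top _ _ (hP.1 1 2 (by decide)),
    h0, h1, h2]

/-- For `n` positive and not divisible by 3, `f₃(Kₙ) = (2/3)m + (1/3)h(m)`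
where `m = n(n-1)/2`. -/
theorem stmt_1 (n : ℕ) (hn : 1 ≤ n) (hn3 : ¬ (3 ∣ n)) (m : ℕ) (hm : m = n * (n - 1) / 2) :
    (maxCut (⊤ : SimpleGraph (Fin n)) 3 : ℝ) = (2 / 3 : ℝ) * m + (1 / 3) * hfun m := by
  set M := n / 3 * (2 * n / 3 - n / 3) + n / 3 * (n - 2 * n / 3) +
      (2 * n / 3 - n / 3) * (n - 2 * n / 3) with hMdef
  have hM : 3 * M + 1 = n ^ 2 := key_arith n hn3
  -- maxCut equals M
  have hmax : maxCut (⊤ : SimpleGraph (Fin n)) 3 = M := by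
    have hmem : M ∈ {k : ℕ | ∃ P : Fin 3 → Finset (Fin n),
        IsKPartition P ∧ crossTotal (⊤ : SimpleGraph (Fin n)) P = k} :=
      ⟨Pbal n, Pbal_isPartition n, Pbal_crossTotal n⟩
    have hub : ∀ k ∈ {k : ℕ | ∃ P : Fin 3 → Finset (Fin n),
        IsKPartition P ∧ crossTotal (⊤ : SimpleGraph (Fin n)) P = k}, k ≤ M := by
      rintro k ⟨P, hP, rfl⟩
      exact upper_bound hn3 M hM P hP
    refine le_antisymm (csSup_le ⟨M, hmem⟩ hub) (le_csSup ⟨M, hub⟩ hmem)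
  rw [hmax]
  -- arithmetic over ℝ
  have hev : 2 ∣ n * (n - 1) := by
    have : n * (n - 1) = (n - 1) * ((n - 1) + 1) := by
      rw [Nat.sub_add_cancel hn]; ring
    rw [this]
    exact even_iff_two_dvd.mp (Nat.even_mul_succ_self (n - 1))
  have hm2 : 2 * m = n * (n - 1) := by
    rw [hm, Nat.mul_div_cancel' hev]
  have hm2R : 2 * (m : ℝ) = (n : ℝ) ^ 2 - n := by
    have : ((2 * m : ℕ) : ℝ) = ((n * (n - 1) : ℕ) : ℝ) := by rw [hm2]
    push_cast [Nat.cast_sub hn] at this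
    push_cast
    nlinarith [this]
  have hMR : 3 * (M : ℝ) + 1 = (n : ℝ) ^ 2 := by exact_mod_cast hM
  have hnR : (1 : ℝ) ≤ (n : ℝ) := by exact_mod_cast hn
  have hsqrt : hfun m = (n : ℝ) - 1 := by
    rw [hfun]
    have harg : 2 * (m : ℝ) + 1 / 4 = ((n : ℝ) - 1 / 2) ^ 2 := by
      rw [hm2R]; ring
    rw [harg, Real.sqrt_sq (by linarith)]
    ring
  rw [hsqrt]
  linarith
end

section
/- Let G be a finite simple graph, k ≥ 2 an integer, and let (V_1, …, V_k) be a k-partition of G of minimum lexicographic order. Then for all i, j ∈ {1, …, k} and every vertex v ∈ V_i: if |N(v) ∩ V_i| ≥ 1, then |N(v) ∩ V_j| ≥ 1. -/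
open Finset

variable {V : Type*} [Fintype V] [DecidableEq V]

/-- The values `e(V₁),…,e(V_k)` of a `k`-partition, listed in nonincreasing order. -/
def lexVals {V : Type*} [Fintype V] [DecidableEq V] (G : SimpleGraph V) [DecidableRel G.Adj]
    {k : ℕ} (P : Fin k → Finset V) : List ℕ :=
  Multiset.sort ((Finset.univ : Finset (Fin k)).val.map fun i => eIn G (P i)) (· ≥ ·)

/-- `Q` is lexicographically smaller than `P`. -/
def LexSmaller {V : Type*} [Fintype V] [DecidableEq V] (G : SimpleGraph V) [DecidableRel G.Adj]
    {k : ℕ} (Q P : Fin k → Finset V) : Prop :=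
  List.Lex (· < ·) (lexVals G Q) (lexVals G P)

/-!
Suppose `v ∈ V_i` has a neighbour in `V_i` but none in `V_j`, and move `v` to `V_j`. This lowers
`e(V_i)` by `|N(v) ∩ V_i| ≥ 1`, raises `e(V_j)` by `|N(v) ∩ V_j| = 0` and leaves every other part
unchanged. Strictly lowering one entry of a multiset makes its nonincreasing sort lexicographically
smaller: both sorts arise by inserting the changed entry into the sort of the remaining entries.
This contradicts minimality.
-/

namespace List

variable {α : Type*} [LinearOrder α]

theorem lex_orderedInsert_cons {a c : α} (hac : a < c) {l : List α} (hl : ∀ x ∈ l, x ≤ c) :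
    Lex (· < ·) (l.orderedInsert (· ≥ ·) a) (c :: l) := by
  induction l with
  | nil => exact .rel hac
  | cons d l ih =>
    rw [orderedInsert_cons]
    split_ifs with had
    · exact .rel hac
    · obtain hdc | rfl := (hl d mem_cons_self).lt_or_eq
      · exact .rel hdc
      · exact .cons (ih fun x hx => hl x (mem_cons_of_mem _ hx))

theorem lex_orderedInsert_orderedInsert {a b : α} (hab : a < b) {l : List α}
    (hl : l.Pairwise (· ≥ ·)) :
    Lex (· < ·) (l.orderedInsert (· ≥ ·) a) (l.orderedInsert (· ≥ ·) b) := by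
  induction l with
  | nil => exact .rel hab
  | cons c l ih =>
    rw [pairwise_cons] at hl
    simp only [orderedInsert_cons]
    split_ifs with hac hbc hbc
    · exact .rel hab
    · exact absurd (hac.trans hab.le) hbc
    · obtain hcb | rfl := hbc.lt_or_eq
      · exact .rel hcb
      · exact .cons (lex_orderedInsert_cons (lt_of_not_ge hac) hl.1)
    · exact .cons (ih hl.2)

end List

theorem Multiset.sort_cons_eq_orderedInsert {α : Type*} (r : α → α → Prop) [DecidableRel r]
    [IsTrans α r] [Std.Antisymm r] [Std.Total r] (a : α) (s : Multiset α) :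
    sort (a ::ₘ s) r = (sort s r).orderedInsert r a :=
  Quot.inductionOn s fun l => by simp [List.mergeSort_eq_insertionSort]

theorem Finset.lex_sort_map_of_lt_of_forall_ne_eq {ι α : Type*} [DecidableEq ι] [LinearOrder α]
    {s : Finset ι} {f g : ι → α} {i : ι} (hi : i ∈ s) (hlt : f i < g i)
    (heq : ∀ l ∈ s, l ≠ i → f l = g l) :
    List.Lex (· < ·) ((s.val.map f).sort (· ≥ ·)) ((s.val.map g).sort (· ≥ ·)) := by
  have hs : s.val = i ::ₘ (s.erase i).val := by
    rw [erase_val, Multiset.cons_erase (mem_val.mpr hi)]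
  have hrest : (s.erase i).val.map f = (s.erase i).val.map g :=
    Multiset.map_congr rfl fun l hl => heq l (mem_of_mem_erase hl) (ne_of_mem_erase hl)
  rw [hs, Multiset.map_cons, Multiset.map_cons, Multiset.sort_cons_eq_orderedInsert,
    Multiset.sort_cons_eq_orderedInsert, hrest]
  exact List.lex_orderedInsert_orderedInsert hlt (Multiset.pairwise_sort _ _)

section Graph

variable (G : SimpleGraph V) [DecidableRel G.Adj]

theorem card_adj_pairs_eq_sum (S : Finset V) :
    #{p : V × V | G.Adj p.1 p.2 ∧ p.1 ∈ S ∧ p.2 ∈ S} =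
      ∑ x ∈ S, ∑ y ∈ S, if G.Adj x y then 1 else 0 := by
  have hpairs : ({p : V × V | G.Adj p.1 p.2 ∧ p.1 ∈ S ∧ p.2 ∈ S} : Finset (V × V)) =
      {p ∈ S ×ˢ S | G.Adj p.1 p.2} := by
    ext; simp only [mem_filter, mem_univ, mem_product, true_and]; tauto
  rw [hpairs, card_filter, sum_product]

theorem card_neighborFinset_inter_eq_sum (v : V) (T : Finset V) :
    #(G.neighborFinset v ∩ T) = ∑ y ∈ T, if G.Adj v y then 1 else 0 := by
  rw [← card_filter, inter_comm]
  congr 1; ext; simp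

theorem eIn_insert {v : V} {T : Finset V} (hv : v ∉ T) :
    eIn G (insert v T) = eIn G T + #(G.neighborFinset v ∩ T) := by
  have hsymm : (∑ x ∈ T, if G.Adj x v then 1 else 0) = ∑ y ∈ T, if G.Adj v y then 1 else 0 :=
    sum_congr rfl fun x _ => by simp only [G.adj_comm]
  unfold eIn
  rw [card_adj_pairs_eq_sum, card_adj_pairs_eq_sum, card_neighborFinset_inter_eq_sum]
  simp only [sum_insert hv, sum_add_distrib, G.irrefl, if_false, hsymm]
  omega

theorem eIn_erase_add {v : V} {S : Finset V} (hv : v ∈ S) :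
    eIn G (S.erase v) + #(G.neighborFinset v ∩ S) = eIn G S := by
  have hdeg : #(G.neighborFinset v ∩ S.erase v) = #(G.neighborFinset v ∩ S) := by
    simp only [card_neighborFinset_inter_eq_sum]
    exact sum_erase _ (if_neg G.irrefl)
  rw [← hdeg, ← eIn_insert G (notMem_erase v S), insert_erase hv]

theorem lexSmaller_of_lt_of_forall_ne_eq {k : ℕ} {Q P : Fin k → Finset V} (i : Fin k)
    (hlt : eIn G (Q i) < eIn G (P i)) (heq : ∀ l ≠ i, eIn G (Q l) = eIn G (P l)) :
    LexSmaller G Q P :=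
  Finset.lex_sort_map_of_lt_of_forall_ne_eq (mem_univ i) hlt fun l _ hl => heq l hl

end Graph

def moveVertex {ι α : Type*} [DecidableEq ι] [DecidableEq α] (P : ι → Finset α) (v : α) (j : ι) :
    ι → Finset α :=
  fun l => if l = j then insert v (P l) else (P l).erase v

section moveVertex

variable {ι α : Type*} [DecidableEq ι] [DecidableEq α] {P : ι → Finset α} {v : α} {j l : ι}

@[simp]
theorem moveVertex_self : moveVertex P v j j = insert v (P j) := if_pos rfl

theorem moveVertex_of_ne (hl : l ≠ j) : moveVertex P v j l = (P l).erase v := if_neg hl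

end moveVertex

theorem IsKPartition.moveVertex {α : Type*} [DecidableEq α] {k : ℕ} {P : Fin k → Finset α}
    (hP : IsKPartition P) (v : α) (j : Fin k) :
    IsKPartition (moveVertex P v j) := by
  refine ⟨fun a b hab => ?_, fun w => ?_⟩
  · have hPab := hP.1 a b hab
    by_cases ha : a = j
    · subst ha
      rw [moveVertex_self, moveVertex_of_ne hab.symm, disjoint_insert_left]
      exact ⟨notMem_erase v _, hPab.mono_right (erase_subset v _)⟩
    by_cases hb : b = j
    · subst hb
      rw [moveVertex_self, moveVertex_of_ne hab, disjoint_insert_right]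
      exact ⟨notMem_erase v _, hPab.mono_left (erase_subset v _)⟩
    rw [moveVertex_of_ne ha, moveVertex_of_ne hb]
    exact hPab.mono (erase_subset v _) (erase_subset v _)
  · by_cases hw : w = v
    · exact ⟨j, by simp [hw]⟩
    obtain ⟨l, hl⟩ := hP.2 w
    refine ⟨l, ?_⟩
    by_cases hlj : l = j
    · subst hlj
      rw [moveVertex_self]
      exact mem_insert_of_mem hl
    · rw [moveVertex_of_ne hlj]
      exact mem_erase_of_ne_of_mem hw hl

theorem stmt_10_general {V : Type*} [Fintype V] [DecidableEq V]
    (G : SimpleGraph V) [DecidableRel G.Adj] (k : ℕ)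
    (P : Fin k → Finset V) (hP : IsKPartition P)
    (hmin : ∀ Q : Fin k → Finset V, IsKPartition Q → ¬ LexSmaller G Q P)
    (i j : Fin k) (v : V) (hv : v ∈ P i)
    (hd : 1 ≤ (G.neighborFinset v ∩ P i).card) :
    1 ≤ (G.neighborFinset v ∩ P j).card := by
  by_contra hnone
  have hji : j ≠ i := by rintro rfl; exact hnone hd
  have hvj : v ∉ P j := disjoint_left.mp (hP.1 i j hji.symm) hv
  refine hmin (moveVertex P v j) (hP.moveVertex v j) (lexSmaller_of_lt_of_forall_ne_eq G i ?_ ?_)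
  · rw [moveVertex_of_ne hji.symm]
    have := eIn_erase_add G hv
    omega
  · intro l hli
    by_cases hlj : l = j
    · subst hlj
      rw [moveVertex_self, eIn_insert G hvj]
      omega
    · rw [moveVertex_of_ne hlj, erase_eq_of_notMem (disjoint_left.mp (hP.1 i l (Ne.symm hli)) hv)]

/-- Lemma on `k`-partitions of minimum lexicographic order. -/
theorem stmt_10 {V : Type*} [Fintype V] [DecidableEq V]
    (G : SimpleGraph V) [DecidableRel G.Adj] (k : ℕ) (hk : 2 ≤ k)
    (P : Fin k → Finset V) (hP : IsKPartition P)
    (hmin : ∀ Q : Fin k → Finset V, IsKPartition Q → ¬ LexSmaller G Q P)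
    (i j : Fin k) (v : V) (hv : v ∈ P i)
    (hd : 1 ≤ (G.neighborFinset v ∩ P i).card) :
    1 ≤ (G.neighborFinset v ∩ P j).card :=
  stmt_10_general G k P hP hmin i j v hv hd
end

section
/- Let k ≥ 3 be an integer, let m ≥ 0 and q be real numbers with q ≤ (k−1)/(2k²)·h(m), and set m' := (k−1)²·m/k² + q. If m' ≥ 0, then m'/(k−1)² + (k−2)/(2(k−1)²)·h(m') ≤ m/k² + (k−1)/(2k²)·h(m). -/
/-!
On `[0, ∞)`, `h` inverts `y ↦ (y² + y)/2`. Writing `s = h(m)` and `t = h(m')`, the hypothesis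
becomes `(t² + t)/2 ≤ (b² + b)/2` with `b = (k-1)s/k`, so `t ≤ (k-1)s/k`. The two sides of the
claim are `(u² + u)/2` and `(v² + v)/2` with `u = t/(k-1) ≤ v = s/k`.
-/

lemma hfun_nonneg {x : ℝ} (hx : 0 ≤ x) : 0 ≤ hfun x := by
  rw [hfun, sub_nonneg, Real.le_sqrt (by norm_num) (by linarith)]
  linarith

lemma hfun_sq_add_self_div_two {x : ℝ} (hx : 0 ≤ x) : (hfun x ^ 2 + hfun x) / 2 = x := by
  have hsq : Real.sqrt (2 * x + 1 / 4) ^ 2 = 2 * x + 1 / 4 := Real.sq_sqrt (by linarith)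
  rw [hfun]
  linear_combination hsq / 2

lemma sq_add_self_le_sq_add_self_iff {α : Type*} [CommRing α] [LinearOrder α]
    [IsStrictOrderedRing α] {a b : α} (hab : 0 < a + b + 1) :
    a ^ 2 + a ≤ b ^ 2 + b ↔ a ≤ b := by
  have hfactor : b ^ 2 + b - (a ^ 2 + a) = (b - a) * (a + b + 1) := by ring
  rw [← sub_nonneg, hfactor, mul_nonneg_iff_of_pos_right hab, sub_nonneg]

/-- Lemma of Xu and Yu: if `m' = (k−1)²m/k² + q` with `q ≤ (k−1)/(2k²)·h(m)` and `m' ≥ 0`,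
then `m'/(k−1)² + (k−2)/(2(k−1)²)·h(m') ≤ m/k² + (k−1)/(2k²)·h(m)`. -/
theorem stmt_13 (k : ℕ) (hk : 3 ≤ k) (m q m' : ℝ) (hm : 0 ≤ m)
    (hq : q ≤ ((k : ℝ) - 1) / (2 * k ^ 2) * hfun m)
    (hm' : m' = ((k : ℝ) - 1) ^ 2 * m / k ^ 2 + q) (hm'0 : 0 ≤ m') :
    m' / ((k : ℝ) - 1) ^ 2 + ((k : ℝ) - 2) / (2 * ((k : ℝ) - 1) ^ 2) * hfun m'
      ≤ m / k ^ 2 + ((k : ℝ) - 1) / (2 * k ^ 2) * hfun m := by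
  have hk1 : (0 : ℝ) < k - 1 := by
    rw [sub_pos]; exact_mod_cast (by omega : 1 < k)
  have hk0 : (0 : ℝ) < k := by linarith
  have hs0 := hfun_nonneg hm
  have ht0 := hfun_nonneg hm'0
  have hs := hfun_sq_add_self_div_two hm
  have ht := hfun_sq_add_self_div_two hm'0
  set s := hfun m
  set t := hfun m'
  have hts : t * k ≤ (k - 1) * s := by
    rw [← le_div_iff₀ hk0, mul_div_right_comm,
      ← sq_add_self_le_sq_add_self_iff (by positivity)]
    calc t ^ 2 + t = 2 * m' := by rw [← ht]; ring
      _ ≤ 2 * (((k : ℝ) - 1) ^ 2 * m / k ^ 2 + (k - 1) / (2 * k ^ 2) * s) := by linarith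
      _ = ((k - 1) / k * s) ^ 2 + (k - 1) / k * s := by
        rw [← hs]; field_simp; ring
  have huv : t / (k - 1) ≤ s / k := by
    rwa [div_le_div_iff₀ hk1 hk0, mul_comm s]
  calc m' / ((k : ℝ) - 1) ^ 2 + ((k : ℝ) - 2) / (2 * ((k : ℝ) - 1) ^ 2) * t
      = ((t / (k - 1)) ^ 2 + t / (k - 1)) / 2 := by
        rw [← ht]; field_simp; ring
    _ ≤ ((s / k) ^ 2 + s / k) / 2 := by gcongr
    _ = m / k ^ 2 + ((k : ℝ) - 1) / (2 * k ^ 2) * s := by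
        rw [← hs]; field_simp; ring
end

section
/- Let m ≥ 18 be a real number, let c ≥ 1/4 be a real number, let d ≥ 1 be an integer, and let β_1 be a real number with β_1 > h(m)/9 and 8m/9 − 10β_1 + 4d + 1/4 ≥ 0. Define ψ(x) := (1/4)·√(16m/9 − 2β_1 + 2d − 2x + 1/4) + x/2 − 2m/9 − (β_1 − d)/2 − (1/3)·√(2m + 1/4) + 1/24 + c. Then ψ(4m/9 + 4β_1 − d) ≥ 0. -/
set_option maxHeartbeats 2000000 in
/-- Analytic lemma about the auxiliary function ψ. -/
theorem stmt_18 (m c β1 : ℝ) (hm : (18:ℝ) ≤ m) (d : ℤ) (hd : 1 ≤ d)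
    (hc : (1 / 4 : ℝ) ≤ c) (hβl : hfun m / 9 < β1) (harg : (0:ℝ) ≤ 8 * m / 9 - 10 * β1 + 4 * (d : ℝ) + 1 / 4)
    (ψ : ℝ → ℝ)
    (hψ : ∀ x : ℝ, ψ x =
      (1 / 4) * Real.sqrt (16 * m / 9 - 2 * β1 + 2 * (d : ℝ) - 2 * x + 1 / 4)
        + x / 2 - 2 * m / 9 - (β1 - (d : ℝ)) / 2
        - (1 / 3) * Real.sqrt (2 * m + 1 / 4) + 1 / 24 + c) :
    0 ≤ ψ (4 * m / 9 + 4 * β1 - (d : ℝ)) := by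
  rw [hψ]
  have hd' : (1:ℝ) ≤ (d:ℝ) := by exact_mod_cast hd
  set s : ℝ := Real.sqrt (2 * m + 1 / 4) with hs_def
  have hs2 : s ^ 2 = 2 * m + 1 / 4 := Real.sq_sqrt (by linarith)
  have hs0 : 0 ≤ s := Real.sqrt_nonneg _
  have hs6 : 6 ≤ s := by nlinarith
  have hβ : (s - 1/2) / 9 ≤ β1 := by
    have := hβl; unfold hfun at this; rw [← hs_def] at this; linarith
  set A : ℝ := 8 * m / 9 - 10 * β1 + 4 * (d:ℝ) + 1/4 with hA_def
  have hA0nn : (0:ℝ) ≤ 8 * m / 9 - 10 * ((s - 1/2)/9) + 4 * (d:ℝ) + 1/4 := by nlinarith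
  set r : ℝ := Real.sqrt (8 * m / 9 - 10 * ((s - 1/2)/9) + 4 * (d:ℝ) + 1/4) with hr_def
  have hr2 : r ^ 2 = 8 * m / 9 - 10 * ((s - 1/2)/9) + 4 * (d:ℝ) + 1/4 := Real.sq_sqrt hA0nn
  have hr0 : 0 ≤ r := Real.sqrt_nonneg _
  have hr53 : 5/3 ≤ r := by nlinarith
  have hAle : A ≤ 8 * m / 9 - 10 * ((s - 1/2)/9) + 4 * (d:ℝ) + 1/4 := by
    rw [hA_def]; linarith
  have hsqrtAle : Real.sqrt A ≤ r := by
    rw [hr_def]; exact Real.sqrt_le_sqrt hAle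
  have hArg_eq : 16 * m / 9 - 2 * β1 + 2 * (d:ℝ) - 2 * (4 * m / 9 + 4 * β1 - (d:ℝ)) + 1/4 = A := by
    rw [hA_def]; ring
  rw [hArg_eq]
  have hrpos : 0 < r := by linarith
  have hsqA2 : Real.sqrt A ^ 2 = A := Real.sq_sqrt harg
  have hge : A / r ≤ Real.sqrt A := by
    rw [div_le_iff₀ hrpos]
    nlinarith [Real.sqrt_nonneg A]
  rw [div_le_iff₀ hrpos] at hge
  -- key inequalities as polynomial facts
  have key1 : 0 ≤ (β1 - (s - 1/2)/9) * (3 * r - 5) := by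
    apply mul_nonneg <;> linarith
  have key2 : (2 * s / 3 - 5/6) ^ 2 ≤ r ^ 2 := by
    have hexp : (2 * s / 3 - 5/6) ^ 2 = 4 * s^2 / 9 - 10 * s / 9 + 25/36 := by ring
    rw [hexp, hr2]; linarith only [hs2, hd']
  have key3 : 2 * s / 3 - 5/6 ≤ r := by nlinarith
  have hsplit : 1/4 * (A / r) + (3/2) * β1 - (1/3) * s + 1/24 + c ≥ 0 := by
    rw [ge_iff_le, ← sub_nonneg]
    have h1 : 1/4 * (A / r) = A / (4 * r) := by ring
    have expand : 1/4 * (A / r) + (3/2) * β1 - (1/3) * s + 1/24 + c - 0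
        = ((A - r^2) / (4*r) + r/4) + (3/2) * β1 - (1/3) * s + 1/24 + c := by
      field_simp; ring
    rw [expand]
    have hAr : (A - r^2) / (4*r) = -10 * (β1 - (s - 1/2)/9) / (4 * r) := by
      rw [hr2, hA_def]; ring_nf
    rw [hAr]
    have hq : -10 * (β1 - (s - 1/2)/9) / (4 * r) + (3/2) * β1
        ≥ (3/2) * ((s-1/2)/9) - (β1 - (s-1/2)/9) * (3 * r - 5) * 0 := by
      rw [ge_iff_le, div_add' _ _ _ (by positivity : (4:ℝ)*r ≠ 0), le_div_iff₀ (by positivity)]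
      nlinarith [key1]
    nlinarith [key3]
  have hfinal : 1/4 * (A/r) ≤ 1/4 * Real.sqrt A := by
    have : A / r ≤ Real.sqrt A := by rw [div_le_iff₀ hrpos]; exact hge
    linarith
  nlinarith [hfinal, hsplit]
end
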